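/- In an $L_x \times L_y$ rectangular lattice, the number of unordered pairs of distinct sites at taxicab distance $m$ is a strictly decreasing function of $m$ on the range $\min(L_x,L_y) \le m \le L_x+L_y-2$, decreasing by exactly $\min(L_x,L_y)^2$ per unit increase of $m$ throughout the middle regime $\min(L_x,L_y) \le m < \max(L_x,L_y)$. -/

import Mathlib

/-- Taxicab distance between two integer lattice points. -/
def taxi (p q : ℤ × ℤ) : ℤ := |p.1 - q.1| + |p.2 - q.2|

/-- The `Lx × Ly` rectangular lattice `{1,…,Lx} × {1,…,Ly}`. -/
noncomputable def sites (Lx Ly : ℤ) : Finset (ℤ × ℤ) := Finset.Icc (1, 1) (Lx, Ly)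

/-- The number of unordered pairs of distinct lattice sites at taxicab distance `m`. -/
noncomputable def pairCount (Lx Ly m : ℤ) : ℕ :=
  (((sites Lx Ly).powersetCard 2).filter
    (fun s => ∃ p ∈ s, ∃ q ∈ s, p ≠ q ∧ taxi p q = m)).card
/-! Assume `Lx ≤ Ly` and `Lx ≤ m`. Two sites at distance `m` then have different `y`-coordinates,
so each pair can be listed with its lower site first; once the `x`-coordinates `x, x'` are chosen,
the `y`-gap is forced to be `m - |x' - x| > 0`. Hence `D(m) = ∑_{x, x'} (Ly - m + |x' - x|)⁺`.
Raising `m` by one lowers each positive summand by exactly one: all `Lx²` of them are positive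
while `m < Ly`, and the summand `x = 1, x' = Lx` stays positive up to `m = Lx + Ly - 2`. -/

open Finset

lemma card_Icc_sq_filter_sub_eq (L t : ℤ) :
    ((Icc 1 L ×ˢ Icc 1 L).filter fun y : ℤ × ℤ => y.2 - y.1 = t).card = (L - |t|).toNat := by
  have h : ((Icc 1 L ×ˢ Icc 1 L).filter fun y : ℤ × ℤ => y.2 - y.1 = t) =
      (Icc (max 1 (1 - t)) (min L (L - t))).image fun x => (x, x + t) := by
    ext ⟨x, y⟩
    simp only [mem_filter, mem_product, mem_Icc, mem_image, Prod.mk.injEq, max_le_iff, le_min_iff]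
    constructor
    · rintro ⟨h, rfl⟩; exact ⟨x, by omega, rfl, by omega⟩
    · rintro ⟨z, hz, rfl, rfl⟩; omega
  rw [h, card_image_of_injective _ fun x y h => by simpa using h, Int.card_Icc, max_def, min_def]
  rcases abs_cases t with ⟨ht, ht'⟩ | ⟨ht, ht'⟩ <;> split_ifs <;> omega

lemma taxi_comm (p q : ℤ × ℤ) : taxi p q = taxi q p := by
  simp only [taxi, abs_sub_comm]

lemma taxi_swap (p q : ℤ × ℤ) : taxi p.swap q.swap = taxi p q :=
  add_comm _ _

lemma sites_eq_product (Lx Ly : ℤ) : sites Lx Ly = Icc 1 Lx ×ˢ Icc 1 Ly := rfl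

lemma pairCount_comm (Lx Ly : ℤ) : pairCount Ly Lx = pairCount Lx Ly := by
  funext m
  have hsites : sites Ly Lx = (sites Lx Ly).map (Equiv.prodComm ℤ ℤ).toEmbedding := by
    ext ⟨y, x⟩
    simp [sites_eq_product]
    tauto
  rw [pairCount, hsites, powersetCard_map, filter_map, card_map, pairCount]
  congr 1
  refine filter_congr fun s _ => ?_
  change (∃ p ∈ s.map (Equiv.prodComm ℤ ℤ).toEmbedding,
    ∃ q ∈ s.map (Equiv.prodComm ℤ ℤ).toEmbedding, _) ↔ _
  simp only [mem_map_equiv, Equiv.prodComm_symm, Equiv.prodComm_apply]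
  constructor
  · rintro ⟨p, hp, q, hq, hpq, rfl⟩
    exact ⟨p.swap, hp, q.swap, hq, by simpa using hpq, taxi_swap p q⟩
  · rintro ⟨p, hp, q, hq, hpq, rfl⟩
    exact ⟨p.swap, by simpa using hp, q.swap, by simpa using hq, by simpa using hpq, taxi_swap p q⟩

lemma snd_ne_snd_of_taxi_eq {Lx Ly m : ℤ} {p q : ℤ × ℤ} (hp : p ∈ sites Lx Ly)
    (hq : q ∈ sites Lx Ly) (hm : Lx ≤ m) (h : taxi p q = m) : p.2 ≠ q.2 := by
  intro hpq
  rw [sites_eq_product, mem_product, mem_Icc] at hp hq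
  have hx : |p.1 - q.1| < Lx := abs_sub_lt_iff.2 ⟨by omega, by omega⟩
  rw [taxi, hpq, sub_self, abs_zero, add_zero] at h
  omega

lemma pairCount_eq_card_coords {Lx Ly m : ℤ} (hm : Lx ≤ m) :
    pairCount Lx Ly m = (((Icc 1 Lx ×ˢ Icc 1 Lx) ×ˢ (Icc 1 Ly ×ˢ Icc 1 Ly)).filter
      fun c : (ℤ × ℤ) × (ℤ × ℤ) => c.2.1 < c.2.2 ∧ |c.1.2 - c.1.1| + (c.2.2 - c.2.1) = m).card := by
  refine (card_bij (fun c _ => {(c.1.1, c.2.1), (c.1.2, c.2.2)}) ?_ ?_ ?_).symm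
  · rintro ⟨⟨x, x'⟩, y, y'⟩ hc
    simp only [mem_filter, mem_product, mem_Icc] at hc
    have hne : (x, y) ≠ (x', y') := fun h => by simp only [Prod.mk.injEq] at h; omega
    refine mem_filter.2 ⟨mem_powersetCard.2 ⟨?_, card_pair hne⟩, _, mem_insert_self _ _, _,
      mem_insert_of_mem (mem_singleton_self _), hne, ?_⟩
    · simp only [insert_subset_iff, singleton_subset_iff, sites_eq_product, mem_product, mem_Icc]
      omega
    · simp only [taxi]
      rw [abs_sub_comm x, abs_of_neg (by omega : y - y' < 0)]
      omega
  · rintro ⟨⟨x₁, x₁'⟩, y₁, y₁'⟩ hc₁ ⟨⟨x₂, x₂'⟩, y₂, y₂'⟩ hc₂ h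
    simp only [mem_filter] at hc₁ hc₂
    have h' := congrArg ((↑) : Finset (ℤ × ℤ) → Set (ℤ × ℤ)) h
    push_cast at h'
    rcases Set.pair_eq_pair_iff.1 h' with ⟨h₁, h₂⟩ | ⟨h₁, h₂⟩ <;>
      simp only [Prod.mk.injEq] at h₁ h₂
    · simp [h₁, h₂]
    · omega
  · intro s hs
    obtain ⟨⟨hsub, hcard⟩, p, hp, q, hq, hpq, hpqm⟩ := by
      simpa only [mem_filter, mem_powersetCard] using hs
    obtain rfl : {p, q} = s :=
      eq_of_subset_of_card_le (by simp [insert_subset_iff, hp, hq]) (by rw [hcard, card_pair hpq])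
    have hy := snd_ne_snd_of_taxi_eq (hsub hp) (hsub hq) hm hpqm
    have hp' := hsub hp
    have hq' := hsub hq
    rw [sites_eq_product, mem_product, mem_Icc, mem_Icc] at hp' hq'
    clear hs hp hq hsub hcard
    wlog hlt : p.2 < q.2 generalizing p q
    · obtain ⟨c, hc, hc'⟩ := this q p hpq.symm (taxi_comm q p ▸ hpqm) hy.symm hq' hp'
        (lt_of_le_of_ne (not_lt.1 hlt) hy.symm)
      exact ⟨c, hc, hc'.trans (pair_comm q p)⟩
    refine ⟨((p.1, q.1), p.2, q.2), ?_, rfl⟩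
    simp only [mem_filter, mem_product, mem_Icc]
    refine ⟨by omega, hlt, ?_⟩
    rw [taxi, abs_sub_comm, abs_of_neg (by omega : p.2 - q.2 < 0)] at hpqm
    omega

lemma pairCount_eq_sum {Lx Ly m : ℤ} (hm : Lx ≤ m) :
    pairCount Lx Ly m = ∑ x ∈ Icc 1 Lx ×ˢ Icc 1 Lx, (Ly - m + |x.2 - x.1|).toNat := by
  rw [pairCount_eq_card_coords hm, card_filter, sum_product]
  refine sum_congr rfl fun x hx => ?_
  have hx : |x.2 - x.1| < m := by
    simp only [mem_product, mem_Icc] at hx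
    exact lt_of_lt_of_le (abs_sub_lt_iff.2 ⟨by omega, by omega⟩) hm
  rw [← card_filter, show Ly - m + |x.2 - x.1| = Ly - abs (m - |x.2 - x.1|) by
    rw [abs_of_pos (by omega : 0 < m - |x.2 - x.1|)]; ring, ← card_Icc_sq_filter_sub_eq]
  congr 1
  refine filter_congr fun y _ => ?_
  dsimp only
  omega

lemma pairCount_eq_pairCount_add_one_add_sq {Lx Ly m : ℤ} (hLx : 0 ≤ Lx) (hm : Lx ≤ m)
    (hmLy : m < Ly) : (pairCount Lx Ly m : ℤ) = pairCount Lx Ly (m + 1) + Lx ^ 2 := by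
  have hcard : ((Icc 1 Lx ×ˢ Icc 1 Lx).card : ℤ) = Lx ^ 2 := by
    rw [card_product, Int.card_Icc]; push_cast; rw [Int.toNat_of_nonneg (by omega)]; ring
  rw [pairCount_eq_sum hm, pairCount_eq_sum (by omega), ← hcard, card_eq_sum_ones,
    ← Nat.cast_add, ← sum_add_distrib]
  congr 1
  refine sum_congr rfl fun x _ => ?_
  have := abs_nonneg (x.2 - x.1)
  omega

lemma pairCount_add_one_lt {Lx Ly m : ℤ} (hLx : 1 ≤ Lx) (hm : Lx ≤ m) (hm' : m ≤ Lx + Ly - 2) :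
    pairCount Lx Ly (m + 1) < pairCount Lx Ly m := by
  rw [pairCount_eq_sum hm, pairCount_eq_sum (by omega)]
  refine sum_lt_sum (fun x _ => by omega) ⟨(1, Lx), by simp [hLx], ?_⟩
  rw [abs_of_nonneg (by omega : (0 : ℤ) ≤ Lx - 1)]
  omega

lemma pairCount_strictAntiOn {Lx : ℤ} (Ly : ℤ) (hLx : 1 ≤ Lx) :
    StrictAntiOn (pairCount Lx Ly) (Set.Icc Lx (Lx + Ly - 2)) :=
  strictAntiOn_of_succ_lt Set.ordConnected_Icc fun m _ hm hm' => by
    rw [Order.succ_eq_add_one] at hm' ⊢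
    exact pairCount_add_one_lt hLx hm.1 (by linarith [hm'.2])

theorem stmt3 (Lx Ly : ℤ) (hLx : 2 ≤ Lx) (hLy : 2 ≤ Ly) :
    (∀ m m' : ℤ, min Lx Ly ≤ m → m < m' → m' ≤ Lx + Ly - 2 →
      pairCount Lx Ly m' < pairCount Lx Ly m) ∧
    (∀ m : ℤ, min Lx Ly ≤ m → m < max Lx Ly →
      (pairCount Lx Ly (m + 1) : ℤ) = (pairCount Lx Ly m : ℤ) - (min Lx Ly) ^ 2) := by
  wlog hxy : Lx ≤ Ly generalizing Lx Ly
  · have h := this Ly Lx hLy hLx (by omega)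
    rwa [pairCount_comm, min_comm, max_comm, add_comm Ly] at h
  rw [min_eq_left hxy, max_eq_right hxy]
  refine ⟨fun m m' hm hmm' hm' =>
    pairCount_strictAntiOn Ly (by omega) ⟨hm, by omega⟩ ⟨by omega, hm'⟩ hmm', fun m hm hm' => ?_⟩
  rw [pairCount_eq_pairCount_add_one_add_sq (by omega) hm hm']
  ring
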